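/- arXiv:2102.09029 — 10 statements merged into one kernel-verified Lean document; each statement's English description precedes it below -/
import Mathlib

section
/- Let L₁ and L₂ be lattices, let f : L₁ → ℝ be submodular on L₁, let g : L₂ → ℝ be submodular on L₂, and let η : L₁ → L₂ satisfy η(x ⊔ x') ≤ η(x) ⊔ η(x') and η(x ⊓ x') ≤ η(x) ⊓ η(x') for all x, x' ∈ L₁. Suppose that for every y ∈ L₂ the minimum of f over the set {x ∈ L₁ : η(x) ≤ y} is attained, and define H : L₂ → ℝ by H(y) = min { f(x) : x ∈ L₁, η(x) ≤ y }. Then the function y ↦ g(y) + H(y) is submodular on L₂. -/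
/-- If `f` and `g` are submodular, `η` satisfies the join/meet sub-homomorphism
conditions, and for every `y` the minimum of `f` over `{x : η(x) ≤ y}` is
attained with value `H(y)`, then `g + H` is submodular on `L₂`. -/
theorem gH_submodular
    {L₁ L₂ : Type*} [Lattice L₁] [Lattice L₂]
    (f : L₁ → ℝ) (g : L₂ → ℝ) (η : L₁ → L₂) (H : L₂ → ℝ)
    (hf : ∀ x x' : L₁, f (x ⊔ x') + f (x ⊓ x') ≤ f x + f x')
    (hg : ∀ y y' : L₂, g (y ⊔ y') + g (y ⊓ y') ≤ g y + g y')
    (hjoin : ∀ x x' : L₁, η (x ⊔ x') ≤ η x ⊔ η x')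
    (hmeet : ∀ x x' : L₁, η (x ⊓ x') ≤ η x ⊓ η x')
    (hH : ∀ y : L₂, ∃ z : L₁, η z ≤ y ∧ (∀ x : L₁, η x ≤ y → f z ≤ f x) ∧ H y = f z) :
    ∀ y y' : L₂,
      (g (y ⊔ y') + H (y ⊔ y')) + (g (y ⊓ y') + H (y ⊓ y')) ≤
      (g y + H y) + (g y' + H y') := by
  intro y y'
  obtain ⟨z, hz, hzmin, hzv⟩ := hH y
  obtain ⟨z', hz', hzmin', hzv'⟩ := hH y'
  obtain ⟨w, _, hwmin, hwv⟩ := hH (y ⊔ y')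
  obtain ⟨v, _, hvmin, hvv⟩ := hH (y ⊓ y')
  have h1 : H (y ⊔ y') ≤ f (z ⊔ z') := by
    rw [hwv]; exact hwmin _ ((hjoin z z').trans (sup_le_sup hz hz'))
  have h2 : H (y ⊓ y') ≤ f (z ⊓ z') := by
    rw [hvv]; exact hvmin _ ((hmeet z z').trans (inf_le_inf hz hz'))
  have := hf z z'
  rw [hzv, hzv']
  have := hg y y'
  linarith
end

section
/- Let L₁ and L₂ be lattices, let f : L₁ → ℝ be submodular on L₁, let g : L₂ → ℝ be submodular and monotone on L₂, and let η : L₁ → L₂ satisfy η(x ⊔ x') ≤ η(x) ⊔ η(x') and η(x ⊓ x') ≤ η(x) ⊓ η(x') for all x, x' ∈ L₁. Suppose for every y ∈ L₂ the minimum of f over {x : η(x) ≤ y} is attained, and define H(y) = min { f(x) : η(x) ≤ y }. Then: (1) the function y ↦ g(y) + H(y) is submodular on L₂; and (2) if y* minimizes g + H over L₂ and x* attains the minimum defining H(y*), then x* minimizes x ↦ f(x) + g(η(x)) over L₁. -/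
/-- Main theorem: under submodularity of `f` and `g`, monotonicity of `g`, and
the join/meet sub-homomorphism conditions on `η`, (1) the function
`y ↦ g(y) + H(y)` is submodular on `L₂`, and (2) if `y*` minimizes `g + H` and
`x*` attains the minimum defining `H(y*)`, then `x*` minimizes
`x ↦ f(x) + g(η(x))` over `L₁`. -/
theorem main_result
    {L₁ L₂ : Type*} [Lattice L₁] [Lattice L₂]
    (f : L₁ → ℝ) (g : L₂ → ℝ) (η : L₁ → L₂) (H : L₂ → ℝ)
    (hf : ∀ x x' : L₁, f (x ⊔ x') + f (x ⊓ x') ≤ f x + f x')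
    (hg : ∀ y y' : L₂, g (y ⊔ y') + g (y ⊓ y') ≤ g y + g y')
    (hgmono : ∀ y y' : L₂, y ≤ y' → g y ≤ g y')
    (hjoin : ∀ x x' : L₁, η (x ⊔ x') ≤ η x ⊔ η x')
    (hmeet : ∀ x x' : L₁, η (x ⊓ x') ≤ η x ⊓ η x')
    (hH : ∀ y : L₂, ∃ z : L₁, η z ≤ y ∧ (∀ x : L₁, η x ≤ y → f z ≤ f x) ∧ H y = f z) :
    (∀ y y' : L₂,
      (g (y ⊔ y') + H (y ⊔ y')) + (g (y ⊓ y') + H (y ⊓ y')) ≤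
      (g y + H y) + (g y' + H y')) ∧
    (∀ (ystar : L₂) (xstar : L₁),
      (∀ y : L₂, g ystar + H ystar ≤ g y + H y) →
      η xstar ≤ ystar → f xstar = H ystar →
      ∀ x : L₁, f xstar + g (η xstar) ≤ f x + g (η x)) := by
  constructor
  · intro y y'
    obtain ⟨z, hz1, hz2, hz3⟩ := hH y
    obtain ⟨z', hz1', hz2', hz3'⟩ := hH y'
    obtain ⟨u, hu1, hu2, hu3⟩ := hH (y ⊔ y')
    obtain ⟨v, hv1, hv2, hv3⟩ := hH (y ⊓ y')
    have h1 : H (y ⊔ y') ≤ f (z ⊔ z') := by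
      rw [hu3]; exact hu2 _ ((hjoin z z').trans (sup_le_sup hz1 hz1'))
    have h2 : H (y ⊓ y') ≤ f (z ⊓ z') := by
      rw [hv3]; exact hv2 _ ((hmeet z z').trans (inf_le_inf hz1 hz1'))
    have := hf z z'
    have := hg y y'
    rw [hz3, hz3']
    linarith
  · intro ystar xstar hmin hle heq x
    obtain ⟨w, hw1, hw2, hw3⟩ := hH (η x)
    have h1 : H (η x) ≤ f x := by rw [hw3]; exact hw2 x le_rfl
    have h2 := hmin (η x)
    have h3 : g (η xstar) ≤ g ystar := hgmono _ _ hle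
    linarith
end

section
/- Let f, W : ℝ → ℝ with f(0) = 0 and W(0) = 0, and suppose W is strictly increasing on [0, ∞). For α ≥ 0 define H(α) = inf { f(z) + α·W(z) : z ≥ 0 }, and assume every such set is bounded below. Suppose 0 ≤ α < β, that H(α) < 0, and that the infimum defining H(β) is attained at some zᵝ ≥ 0 (i.e., H(β) = f(zᵝ) + β·W(zᵝ)). Then H(α) < H(β). Moreover, if H(c) = 0 for some c ≥ 0, then H(β) = 0 for every β ≥ c. -/
/-- With `f(0) = W(0) = 0` and `W` strictly increasing on `[0, ∞)`, the
function `H(α) = inf { f(z) + α·W(z) : z ≥ 0 }` is strictly increasing at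
points where it is negative (provided the infimum at the larger parameter is
attained), and once it hits zero it stays zero. -/
theorem H_strictly_increasing_until_zero
    (f W : ℝ → ℝ) (hf0 : f 0 = 0) (hW0 : W 0 = 0)
    (hW : ∀ z z' : ℝ, 0 ≤ z → z < z' → W z < W z')
    (H : ℝ → ℝ)
    (hH : ∀ α : ℝ, 0 ≤ α → H α = sInf ((fun z => f z + α * W z) '' {z : ℝ | 0 ≤ z}))
    (hbdd : ∀ α : ℝ, 0 ≤ α → BddBelow ((fun z => f z + α * W z) '' {z : ℝ | 0 ≤ z})) :
    (∀ α β : ℝ, 0 ≤ α → α < β → H α < 0 →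
      (∃ zβ : ℝ, 0 ≤ zβ ∧ H β = f zβ + β * W zβ) → H α < H β) ∧
    (∀ c : ℝ, 0 ≤ c → H c = 0 → ∀ β : ℝ, c ≤ β → H β = 0) := by
  have hWnn : ∀ z : ℝ, 0 ≤ z → 0 ≤ W z := by
    intro z hz
    rcases eq_or_lt_of_le hz with h | h
    · rw [← h, hW0]
    · have := hW 0 z le_rfl h
      rw [hW0] at this
      exact this.le
  have hle : ∀ α : ℝ, 0 ≤ α → ∀ z : ℝ, 0 ≤ z → H α ≤ f z + α * W z := by
    intro α hα z hz
    rw [hH α hα]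
    exact csInf_le (hbdd α hα) ⟨z, hz, rfl⟩
  constructor
  · rintro α β hα hαβ hHα ⟨zβ, hzβ, hHβ⟩
    rcases eq_or_lt_of_le hzβ with h | h
    · have : H β = 0 := by rw [hHβ, ← h, hf0, hW0]; ring
      linarith
    · have hWpos : 0 < W zβ := by have := hW 0 zβ le_rfl h; rwa [hW0] at this
      have := hle α hα zβ hzβ
      have : H α ≤ f zβ + α * W zβ := this
      nlinarith
  · intro c hc hHc β hβ
    have hβ0 : 0 ≤ β := hc.trans hβ
    have h1 : H β ≤ 0 := by
      have := hle β hβ0 0 le_rfl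
      rw [hf0, hW0] at this; linarith
    have h2 : 0 ≤ H β := by
      rw [hH β hβ0]
      apply le_csInf (Set.Nonempty.image _ ⟨0, le_rfl⟩)
      rintro x ⟨z, hz, rfl⟩
      show 0 ≤ f z + β * W z
      have hc' := hle c hc z hz
      rw [hHc] at hc'
      have := hWnn z hz
      nlinarith
    linarith
end

section
/- Let n be a positive integer, let g : Finset (Fin n) → ℝ be submodular (g(A ∪ B) + g(A ∩ B) ≤ g(A) + g(B) for all A, B) and monotone (A ⊆ B implies g(A) ≤ g(B)). For each i ∈ Fin n let Hᵢ : ℝ → ℝ satisfy: Hᵢ(μ) ≤ 0 for all μ; Hᵢ is monotone nondecreasing; and for all α < β, if Hᵢ(α) < 0 then Hᵢ(α) < Hᵢ(β). Fix α < β, and let Aᵅ be a minimizer of A ↦ g(A) + Σ_{i ∈ A} Hᵢ(α) of minimum cardinality among all minimizers, and Aᵝ a minimizer of A ↦ g(A) + Σ_{i ∈ A} Hᵢ(β) of minimum cardinality among all minimizers. Then Aᵝ ⊆ Aᵅ. -/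
/-- Nestedness of minimal-cardinality minimizers: if `g` is submodular and
monotone, each `Hᵢ` is nonpositive, nondecreasing, and strictly increasing
where negative, and `Aᵅ`, `Aᵝ` are minimum-cardinality minimizers of
`A ↦ g(A) + Σ_{i ∈ A} Hᵢ(α)` and `A ↦ g(A) + Σ_{i ∈ A} Hᵢ(β)` respectively
with `α < β`, then `Aᵝ ⊆ Aᵅ`. -/
theorem minimal_minimizers_nested
    (n : ℕ) (hn : 0 < n) (g : Finset (Fin n) → ℝ)
    (hgsub : ∀ A B : Finset (Fin n), g (A ∪ B) + g (A ∩ B) ≤ g A + g B)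
    (hgmono : ∀ A B : Finset (Fin n), A ⊆ B → g A ≤ g B)
    (H : Fin n → ℝ → ℝ)
    (hHle : ∀ (i : Fin n) (μ : ℝ), H i μ ≤ 0)
    (hHmono : ∀ i : Fin n, Monotone (H i))
    (hHstrict : ∀ (i : Fin n) (α β : ℝ), α < β → H i α < 0 → H i α < H i β)
    (α β : ℝ) (hαβ : α < β)
    (Aα Aβ : Finset (Fin n))
    (hAαmin : ∀ B : Finset (Fin n),
      g Aα + ∑ i ∈ Aα, H i α ≤ g B + ∑ i ∈ B, H i α)
    (hAαcard : ∀ B : Finset (Fin n),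
      g B + ∑ i ∈ B, H i α ≤ g Aα + ∑ i ∈ Aα, H i α → Aα.card ≤ B.card)
    (hAβmin : ∀ B : Finset (Fin n),
      g Aβ + ∑ i ∈ Aβ, H i β ≤ g B + ∑ i ∈ B, H i β)
    (hAβcard : ∀ B : Finset (Fin n),
      g B + ∑ i ∈ B, H i β ≤ g Aβ + ∑ i ∈ Aβ, H i β → Aβ.card ≤ B.card) :
    Aβ ⊆ Aα := by
  have hsum1 : ∑ i ∈ Aα ∪ Aβ, H i α
      = ∑ i ∈ Aα, H i α + ∑ i ∈ Aβ \ Aα, H i α := by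
    rw [← Finset.sum_union (Finset.disjoint_sdiff)]
    congr 1
    rw [Finset.union_sdiff_self_eq_union]
  have hsum2 : ∑ i ∈ Aβ, H i β
      = ∑ i ∈ Aα ∩ Aβ, H i β + ∑ i ∈ Aβ \ Aα, H i β := by
    rw [← Finset.sum_union]
    · congr 1
      ext x
      simp [Finset.mem_inter, Finset.mem_sdiff, Finset.mem_union]
      tauto
    · rw [Finset.disjoint_left]
      intro a ha hb
      exact (Finset.mem_sdiff.mp hb).2 (Finset.mem_inter.mp ha).1
  have hmono : ∑ i ∈ Aβ \ Aα, H i α ≤ ∑ i ∈ Aβ \ Aα, H i β :=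
    Finset.sum_le_sum fun i _ => hHmono i hαβ.le
  have h1 := hAαmin (Aα ∪ Aβ)
  have h2 := hgsub Aα Aβ
  have key : g (Aα ∩ Aβ) + ∑ i ∈ Aα ∩ Aβ, H i β
      ≤ g Aβ + ∑ i ∈ Aβ, H i β := by
    rw [hsum1] at h1
    rw [hsum2]
    linarith
  have hcard := hAβcard _ key
  have hsub : Aα ∩ Aβ ⊆ Aβ := Finset.inter_subset_right
  have heq : Aα ∩ Aβ = Aβ :=
    Finset.eq_of_subset_of_card_le hsub hcard
  rw [← heq]
  exact Finset.inter_subset_left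
end

section
/- Let n be a positive integer and λ ≥ 0 a real number. Define g : Finset (Fin n) → ℝ by g(∅) = 0 and, for nonempty A, g(A) = λ·((n − 1) + (max A − min A) + |A|), where max A and min A are the largest and smallest indices in A (viewed as natural numbers, or as real numbers via coercion) and |A| is the cardinality of A. Then g is monotone (A ⊆ B implies g(A) ≤ g(B)) and submodular (g(A ∪ B) + g(A ∩ B) ≤ g(A) + g(B) for all A, B ⊆ Fin n). -/
/-- The modified range set function: `g(∅) = 0` and, for nonempty `A`,
`g(A) = λ·((n − 1) + (max A − min A) + |A|)`. -/
noncomputable def rangePenalty (n : ℕ) (lam : ℝ) (A : Finset (Fin n)) : ℝ :=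
  if h : A.Nonempty then
    lam * (((n : ℝ) - 1) + (((A.max' h : Fin n) : ℕ) - ((A.min' h : Fin n) : ℕ) : ℝ)
      + (A.card : ℝ))
  else 0

lemma rangePenalty_nonneg (n : ℕ) (hn : 0 < n) (lam : ℝ) (hlam : 0 ≤ lam)
    (A : Finset (Fin n)) : 0 ≤ rangePenalty n lam A := by
  unfold rangePenalty
  split_ifs with h
  · apply mul_nonneg hlam
    have h1 : (1:ℝ) ≤ n := by exact_mod_cast hn
    have h2 : ((A.min' h : Fin n) : ℕ) ≤ ((A.max' h : Fin n) : ℕ) :=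
      A.min'_le _ (A.max'_mem h)
    have h2' : (((A.min' h : Fin n) : ℕ) : ℝ) ≤ (((A.max' h : Fin n) : ℕ) : ℝ) := by
      exact_mod_cast h2
    have h3 : (0:ℝ) ≤ (A.card : ℝ) := by positivity
    linarith
  · exact le_rfl

/-- For `λ ≥ 0`, the modified range set function is monotone and submodular. -/
theorem rangePenalty_monotone_submodular
    (n : ℕ) (hn : 0 < n) (lam : ℝ) (hlam : 0 ≤ lam) :
    (∀ A B : Finset (Fin n), A ⊆ B → rangePenalty n lam A ≤ rangePenalty n lam B) ∧
    (∀ A B : Finset (Fin n),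
      rangePenalty n lam (A ∪ B) + rangePenalty n lam (A ∩ B) ≤
      rangePenalty n lam A + rangePenalty n lam B) := by
  constructor
  · intro A B hAB
    by_cases hA : A.Nonempty
    · have hB : B.Nonempty := hA.mono hAB
      rw [rangePenalty, rangePenalty, dif_pos hA, dif_pos hB]
      apply mul_le_mul_of_nonneg_left _ hlam
      have hmax : ((A.max' hA : Fin n) : ℕ) ≤ ((B.max' hB : Fin n) : ℕ) :=
        Finset.max'_subset hA hAB
      have hmin : ((B.min' hB : Fin n) : ℕ) ≤ ((A.min' hA : Fin n) : ℕ) :=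
        Finset.min'_subset hA hAB
      have hcard : A.card ≤ B.card := Finset.card_le_card hAB
      have hmax' : (((A.max' hA : Fin n) : ℕ) : ℝ) ≤ (((B.max' hB : Fin n) : ℕ) : ℝ) := by
        exact_mod_cast hmax
      have hmin' : (((B.min' hB : Fin n) : ℕ) : ℝ) ≤ (((A.min' hA : Fin n) : ℕ) : ℝ) := by
        exact_mod_cast hmin
      have hcard' : ((A.card : ℕ) : ℝ) ≤ ((B.card : ℕ) : ℝ) := by exact_mod_cast hcard
      linarith
    · rw [rangePenalty, dif_neg hA]
      exact rangePenalty_nonneg n hn lam hlam B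
  · intro A B
    by_cases hA : A.Nonempty
    · by_cases hB : B.Nonempty
      · have hU : (A ∪ B).Nonempty := hA.mono Finset.subset_union_left
        have hcard : (A ∪ B).card + (A ∩ B).card = A.card + B.card :=
          Finset.card_union_add_card_inter A B
        have hcard' : (((A ∪ B).card : ℕ) : ℝ) + (((A ∩ B).card : ℕ) : ℝ)
            = ((A.card : ℕ) : ℝ) + ((B.card : ℕ) : ℝ) := by exact_mod_cast hcard
        by_cases hI : (A ∩ B).Nonempty
        · rw [rangePenalty, rangePenalty, rangePenalty, rangePenalty,
            dif_pos hA, dif_pos hB, dif_pos hU, dif_pos hI]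
          rw [← mul_add, ← mul_add]
          apply mul_le_mul_of_nonneg_left _ hlam
          -- max inequality
          have hmaxsum : (((A ∪ B).max' hU : Fin n) : ℕ) + (((A ∩ B).max' hI : Fin n) : ℕ)
              ≤ ((A.max' hA : Fin n) : ℕ) + ((B.max' hB : Fin n) : ℕ) := by
            have hmem := (A ∪ B).max'_mem hU
            rcases Finset.mem_union.mp hmem with hm | hm
            · have h1 : (A ∪ B).max' hU ≤ A.max' hA := Finset.le_max' A _ hm
              have h2 : (A ∩ B).max' hI ≤ B.max' hB :=
                Finset.le_max' B _ (Finset.mem_of_mem_inter_right ((A ∩ B).max'_mem hI))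
              exact Nat.add_le_add h1 h2
            · have h1 : (A ∪ B).max' hU ≤ B.max' hB := Finset.le_max' B _ hm
              have h2 : (A ∩ B).max' hI ≤ A.max' hA :=
                Finset.le_max' A _ (Finset.mem_of_mem_inter_left ((A ∩ B).max'_mem hI))
              omega
          -- min inequality
          have hminsum : ((A.min' hA : Fin n) : ℕ) + ((B.min' hB : Fin n) : ℕ)
              ≤ (((A ∪ B).min' hU : Fin n) : ℕ) + (((A ∩ B).min' hI : Fin n) : ℕ) := by
            have hmem := (A ∪ B).min'_mem hU
            rcases Finset.mem_union.mp hmem with hm | hm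
            · have h1 : A.min' hA ≤ (A ∪ B).min' hU := Finset.min'_le A _ hm
              have h2 : B.min' hB ≤ (A ∩ B).min' hI :=
                Finset.min'_le B _ (Finset.mem_of_mem_inter_right ((A ∩ B).min'_mem hI))
              exact Nat.add_le_add h1 h2
            · have h1 : B.min' hB ≤ (A ∪ B).min' hU := Finset.min'_le B _ hm
              have h2 : A.min' hA ≤ (A ∩ B).min' hI :=
                Finset.min'_le A _ (Finset.mem_of_mem_inter_left ((A ∩ B).min'_mem hI))
              omega
          have hmaxsum' : ((((A ∪ B).max' hU : Fin n) : ℕ) : ℝ) + ((((A ∩ B).max' hI : Fin n) : ℕ) : ℝ)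
              ≤ (((A.max' hA : Fin n) : ℕ) : ℝ) + (((B.max' hB : Fin n) : ℕ) : ℝ) := by
            exact_mod_cast hmaxsum
          have hminsum' : (((A.min' hA : Fin n) : ℕ) : ℝ) + (((B.min' hB : Fin n) : ℕ) : ℝ)
              ≤ ((((A ∪ B).min' hU : Fin n) : ℕ) : ℝ) + ((((A ∩ B).min' hI : Fin n) : ℕ) : ℝ) := by
            exact_mod_cast hminsum
          linarith
        · rw [rangePenalty, rangePenalty, rangePenalty, rangePenalty,
            dif_pos hA, dif_pos hB, dif_pos hU, dif_neg hI]
          have hIcard : (A ∩ B).card = 0 := by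
            simp [Finset.not_nonempty_iff_eq_empty.mp hI]
          have hcardU : (((A ∪ B).card : ℕ) : ℝ) = ((A.card : ℕ) : ℝ) + ((B.card : ℕ) : ℝ) := by
            rw [hIcard, add_zero] at hcard; exact_mod_cast hcard
          rw [add_zero, ← mul_add]
          apply mul_le_mul_of_nonneg_left _ hlam
          have hmaxU : ((((A ∪ B).max' hU : Fin n) : ℕ) : ℝ) ≤ (n : ℝ) - 1 := by
            have := ((A ∪ B).max' hU).isLt
            have : (((A ∪ B).max' hU : Fin n) : ℕ) + 1 ≤ n := this
            have := (Nat.cast_le (α := ℝ)).mpr this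
            push_cast at this
            linarith
          have hminU : (0:ℝ) ≤ ((((A ∪ B).min' hU : Fin n) : ℕ) : ℝ) := by positivity
          have h1 : (1:ℝ) ≤ n := by exact_mod_cast hn
          have hA2 : (((A.min' hA : Fin n) : ℕ) : ℝ) ≤ (((A.max' hA : Fin n) : ℕ) : ℝ) := by
            exact_mod_cast (A.min'_le _ (A.max'_mem hA) : ((A.min' hA : Fin n) : ℕ) ≤ _)
          have hB2 : (((B.min' hB : Fin n) : ℕ) : ℝ) ≤ (((B.max' hB : Fin n) : ℕ) : ℝ) := by
            exact_mod_cast (B.min'_le _ (B.max'_mem hB) : ((B.min' hB : Fin n) : ℕ) ≤ _)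
          linarith
      · have hBe : B = ∅ := Finset.not_nonempty_iff_eq_empty.mp hB
        subst hBe
        simp [rangePenalty]
    · have hAe : A = ∅ := Finset.not_nonempty_iff_eq_empty.mp hA
      subst hAe
      simp [rangePenalty]
end

section
/- Let n ≥ 2, let y : Fin n → ℝ, and let μ ≥ 0. Define f : (Fin n → ℝ) → ℝ by f(x) = (1/2)·Σᵢ (x i − y i)² + μ·Σ_{i=1}^{n−1} (x i − x (i+1))². Then f is convex on ℝⁿ and f is submodular with respect to the componentwise order on Fin n → ℝ: f(x ⊔ x') + f(x ⊓ x') ≤ f(x) + f(x') for all x, x', where (x ⊔ x') i = max(x i, x' i) and (x ⊓ x') i = min(x i, x' i). -/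
/-!
Convexity and submodularity are both preserved by finite sums and nonnegative multiples, so it
suffices to check each summand. Every summand is the square of an affine function, hence convex.
A summand `g (x i)` depending on a single coordinate is modular, and `(x i - x j) ^ 2` is
submodular: when `x` and `x'` are ordered differently at `i` and `j`, the two sides differ by
`2 (x' i - x i) (x j - x' j) ≥ 0`, and otherwise they are equal.
-/

/-- The denoising objective
`f(x) = (1/2)·Σᵢ (xᵢ − yᵢ)² + μ·Σ_{i=1}^{n−1} (xᵢ − x_{i+1})²`. -/
noncomputable def denoiseObj (n : ℕ) (hn : 2 ≤ n) (y : Fin n → ℝ) (μ : ℝ)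
    (x : Fin n → ℝ) : ℝ :=
  (1 / 2) * ∑ i, (x i - y i) ^ 2 +
    μ * ∑ i : Fin (n - 1),
      (x ⟨i.val, by have := i.isLt; omega⟩ - x ⟨i.val + 1, by have := i.isLt; omega⟩) ^ 2

open Finset

theorem ConvexOn.sum {𝕜 E β ι : Type*} [Semiring 𝕜] [PartialOrder 𝕜] [AddCommMonoid E]
    [AddCommMonoid β] [PartialOrder β] [IsOrderedAddMonoid β] [SMul 𝕜 E] [Module 𝕜 β]
    {s : Set E} (hs : Convex 𝕜 s) (t : Finset ι) {f : ι → E → β}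
    (hf : ∀ i ∈ t, ConvexOn 𝕜 s (f i)) : ConvexOn 𝕜 s fun x ↦ ∑ i ∈ t, f i x := by
  classical
  induction t using Finset.induction_on with
  | empty => simpa using convexOn_const (0 : β) hs
  | insert i t hi ih =>
    simp only [Finset.sum_insert hi]
    exact (hf i (mem_insert_self i t)).add (ih fun j hj ↦ hf j (mem_insert_of_mem hj))

theorem convexOn_sq_affineMap {E : Type*} [AddCommGroup E] [Module ℝ E] (φ : E →ᵃ[ℝ] ℝ) :
    ConvexOn ℝ Set.univ fun x ↦ φ x ^ 2 :=
  even_two.convexOn_pow.comp_affineMap φ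

def IsSubmodular {α : Type*} [Lattice α] (f : α → ℝ) : Prop :=
  ∀ x x', f (x ⊔ x') + f (x ⊓ x') ≤ f x + f x'

namespace IsSubmodular

variable {α : Type*} [Lattice α] {f g : α → ℝ}

theorem add (hf : IsSubmodular f) (hg : IsSubmodular g) : IsSubmodular fun x ↦ f x + g x :=
  fun x x' ↦ by linarith [hf x x', hg x x']

theorem const_mul (hf : IsSubmodular f) {c : ℝ} (hc : 0 ≤ c) : IsSubmodular fun x ↦ c * f x :=
  fun x x' ↦ by nlinarith [hf x x']

theorem sum {ι : Type*} (t : Finset ι) {f : ι → α → ℝ} (hf : ∀ i ∈ t, IsSubmodular (f i)) :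
    IsSubmodular fun x ↦ ∑ i ∈ t, f i x := fun x x' ↦ by
  simp only [← Finset.sum_add_distrib]
  exact Finset.sum_le_sum fun i hi ↦ hf i hi x x'

end IsSubmodular

theorem add_comp_max_min {L : Type*} [LinearOrder L] (g : L → ℝ) (a b : L) :
    g (max a b) + g (min a b) = g a + g b := by
  rcases le_total a b with h | h
  · rw [max_eq_right h, min_eq_left h, add_comm]
  · rw [max_eq_left h, min_eq_right h]

theorem isSubmodular_comp_eval {ι L : Type*} [LinearOrder L] (g : L → ℝ) (i : ι) :
    IsSubmodular fun x : ι → L ↦ g (x i) := fun x x' ↦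
  (add_comp_max_min g (x i) (x' i)).le

theorem sq_max_sub_max_add_sq_min_sub_min_le (a b c d : ℝ) :
    (max a c - max b d) ^ 2 + (min a c - min b d) ^ 2 ≤ (a - b) ^ 2 + (c - d) ^ 2 := by
  rcases le_total a c with h | h <;> rcases le_total b d with h' | h' <;>
    simp only [max_eq_right, max_eq_left, min_eq_left, min_eq_right, h, h'] <;>
    nlinarith [mul_nonneg (sub_nonneg.2 h) (sub_nonneg.2 h')]

theorem isSubmodular_sq_eval_sub_eval {ι : Type*} (i j : ι) :
    IsSubmodular fun x : ι → ℝ ↦ (x i - x j) ^ 2 := fun x x' ↦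
  sq_max_sub_max_add_sq_min_sub_min_le (x i) (x j) (x' i) (x' j)

/-- For `μ ≥ 0`, the denoising objective is convex on `ℝⁿ` and submodular with
respect to the componentwise order. -/
theorem denoiseObj_convex_submodular
    (n : ℕ) (hn : 2 ≤ n) (y : Fin n → ℝ) (μ : ℝ) (hμ : 0 ≤ μ) :
    ConvexOn ℝ Set.univ (denoiseObj n hn y μ) ∧
    (∀ x x' : Fin n → ℝ,
      denoiseObj n hn y μ (x ⊔ x') + denoiseObj n hn y μ (x ⊓ x') ≤
      denoiseObj n hn y μ x + denoiseObj n hn y μ x') := by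
  let fst (i : Fin (n - 1)) : Fin n := ⟨i, by omega⟩
  let snd (i : Fin (n - 1)) : Fin n := ⟨i + 1, by omega⟩
  constructor
  · have data := ConvexOn.sum convex_univ univ fun i _ ↦
      convexOn_sq_affineMap ((LinearMap.proj (R := ℝ) (φ := fun _ : Fin n ↦ ℝ) i).toAffineMap -
        AffineMap.const ℝ _ (y i))
    have smooth := ConvexOn.sum convex_univ univ fun i _ ↦
      convexOn_sq_affineMap (LinearMap.proj (R := ℝ) (φ := fun _ : Fin n ↦ ℝ) (fst i) -
        LinearMap.proj (snd i)).toAffineMap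
    exact (data.smul (by norm_num : (0 : ℝ) ≤ 1 / 2)).add (smooth.smul hμ)
  · have data := IsSubmodular.sum univ fun i _ ↦ isSubmodular_comp_eval (fun t ↦ (t - y i) ^ 2) i
    have smooth := IsSubmodular.sum univ fun i _ ↦ isSubmodular_sq_eval_sub_eval (fst i) (snd i)
    exact (data.const_mul (by norm_num)).add (smooth.const_mul hμ)
end

section
/- Let n be a positive integer, Q an n × n real symmetric matrix, and p ∈ ℝⁿ. Define f : (Fin n → ℝ) → ℝ by f(x) = xᵀQx + pᵀx = Σ_{i,j} Q i j · x i · x j + Σᵢ p i · x i. Then f is submodular with respect to the componentwise order on Fin n → ℝ (i.e., f(x ⊔ x') + f(x ⊓ x') ≤ f(x) + f(x') for all x, x') if and only if Q i j ≤ 0 for all i ≠ j. -/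
/-- The quadratic objective `f(x) = xᵀQx + pᵀx`. -/
def quadObj {n : ℕ} (Q : Matrix (Fin n) (Fin n) ℝ) (p : Fin n → ℝ)
    (x : Fin n → ℝ) : ℝ :=
  (∑ i, ∑ j, Q i j * x i * x j) + ∑ i, p i * x i

/-!
Write `Δ i j = (x ⊔ x') i * (x ⊔ x') j + (x ⊓ x') i * (x ⊓ x') j - (x i * x j + x' i * x' j)`.
Since `max + min` is the sum, the linear part of `quadObj` is modular and
`f (x ⊔ x') + f (x ⊓ x') - f x - f x' = ∑ i j, Q i j * Δ i j`. The diagonal terms `Δ i i` vanish and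
the rearrangement inequality gives `Δ i j ≥ 0`, so nonpositive off-diagonal entries make the sum
nonpositive. Conversely, at `x = Pi.single i 1`, `x' = Pi.single j 1` with `i ≠ j` the defect is
`Q i j + Q j i = 2 * Q i j`.
-/

open Finset

theorem mul_add_mul_le_max_mul_max_add_min_mul_min {R : Type*} [CommRing R] [LinearOrder R]
    [IsStrictOrderedRing R] (a b c d : R) :
    a * c + b * d ≤ max a b * max c d + min a b * min c d := by
  rcases le_total a b with hab | hba <;> rcases le_total c d with hcd | hdc
  · simp only [max_eq_right hab, max_eq_right hcd, min_eq_left hab, min_eq_left hcd]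
    linarith
  · simp only [max_eq_right hab, max_eq_left hdc, min_eq_left hab, min_eq_right hdc]
    linear_combination mul_nonneg (sub_nonneg.2 hab) (sub_nonneg.2 hdc)
  · simp only [max_eq_left hba, max_eq_right hcd, min_eq_right hba, min_eq_left hcd]
    linear_combination mul_nonneg (sub_nonneg.2 hba) (sub_nonneg.2 hcd)
  · simp only [max_eq_left hba, max_eq_left hdc, min_eq_right hba, min_eq_right hdc]
    linarith

theorem Pi.single_sup_single_of_ne {ι R : Type*} [DecidableEq ι] [AddZeroClass R] [Lattice R]
    {i j : ι} (hij : i ≠ j) {a b : R} (ha : 0 ≤ a) (hb : 0 ≤ b) :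
    (Pi.single i a ⊔ Pi.single j b : ι → R) = Pi.single i a + Pi.single j b := by
  ext k
  by_cases hki : k = i <;> by_cases hkj : k = j <;> simp_all

theorem Pi.single_inf_single_of_ne {ι R : Type*} [DecidableEq ι] [Zero R] [Lattice R]
    {i j : ι} (hij : i ≠ j) {a b : R} (ha : 0 ≤ a) (hb : 0 ≤ b) :
    (Pi.single i a ⊓ Pi.single j b : ι → R) = 0 := by
  ext k
  by_cases hki : k = i <;> by_cases hkj : k = j <;> simp_all

theorem sum_sum_mul_single_mul_single {ι R : Type*} [Fintype ι] [DecidableEq ι]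
    [NonAssocSemiring R] (Q : Matrix ι ι R) (i j : ι) :
    ∑ k, ∑ l, Q k l * ((Pi.single i 1 : ι → R) k * (Pi.single j 1 : ι → R) l
      + (Pi.single j 1 : ι → R) k * (Pi.single i 1 : ι → R) l) = Q i j + Q j i := by
  simp [Pi.single_apply, mul_add, sum_add_distrib]

section
variable {n : ℕ} (Q : Matrix (Fin n) (Fin n) ℝ) (p : Fin n → ℝ)

theorem quadObj_sup_add_quadObj_inf (x x' : Fin n → ℝ) :
    quadObj Q p (x ⊔ x') + quadObj Q p (x ⊓ x') = quadObj Q p x + quadObj Q p x' +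
      ∑ i, ∑ j, Q i j * ((x ⊔ x') i * (x ⊔ x') j + (x ⊓ x') i * (x ⊓ x') j
        - (x i * x j + x' i * x' j)) := by
  have hlin : ∑ i, p i * (x ⊔ x') i + ∑ i, p i * (x ⊓ x') i
      = ∑ i, p i * x i + ∑ i, p i * x' i := by
    simp only [← sum_add_distrib, ← mul_add, Pi.sup_apply, Pi.inf_apply, max_add_min]
  simp only [quadObj, mul_sub, mul_add, sum_sub_distrib, sum_add_distrib, ← mul_assoc]
  linarith

theorem quadObj_add_add_quadObj_zero (x y : Fin n → ℝ) :
    quadObj Q p (x + y) + quadObj Q p 0 = quadObj Q p x + quadObj Q p y +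
      ∑ i, ∑ j, Q i j * (x i * y j + y i * x j) := by
  simp only [quadObj, Pi.add_apply, Pi.zero_apply, mul_add, add_mul, mul_zero,
    sum_add_distrib, sum_const_zero, ← mul_assoc]
  ring

end

theorem quadObj_submodular_iff_general
    (n : ℕ) (Q : Matrix (Fin n) (Fin n) ℝ) (hQ : Q.IsSymm)
    (p : Fin n → ℝ) :
    (∀ x x' : Fin n → ℝ,
      quadObj Q p (x ⊔ x') + quadObj Q p (x ⊓ x') ≤ quadObj Q p x + quadObj Q p x') ↔
    (∀ i j : Fin n, i ≠ j → Q i j ≤ 0) := by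
  constructor
  · intro hsub i j hij
    have h := hsub (Pi.single i 1) (Pi.single j 1)
    rw [Pi.single_sup_single_of_ne hij zero_le_one zero_le_one,
      Pi.single_inf_single_of_ne hij zero_le_one zero_le_one, quadObj_add_add_quadObj_zero,
      sum_sum_mul_single_mul_single] at h
    linarith [hQ.apply i j]
  · intro hoff x x'
    rw [quadObj_sup_add_quadObj_inf]
    suffices ∑ i, ∑ j, Q i j * ((x ⊔ x') i * (x ⊔ x') j + (x ⊓ x') i * (x ⊓ x') j
        - (x i * x j + x' i * x' j)) ≤ 0 by linarith
    refine sum_nonpos fun i _ => sum_nonpos fun j _ => ?_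
    rcases eq_or_ne i j with rfl | hij
    · simp [fn_max_add_fn_min (fun t : ℝ => t * t)]
    · exact mul_nonpos_of_nonpos_of_nonneg (hoff i j hij)
        (sub_nonneg.2 (mul_add_mul_le_max_mul_max_add_min_mul_min _ _ _ _))

/-- A quadratic form `xᵀQx + pᵀx` with `Q` symmetric is submodular with respect
to the componentwise order on `Fin n → ℝ` iff all off-diagonal entries of `Q`
are nonpositive. -/
theorem quadObj_submodular_iff
    (n : ℕ) (hn : 0 < n) (Q : Matrix (Fin n) (Fin n) ℝ) (hQ : Q.IsSymm)
    (p : Fin n → ℝ) :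
    (∀ x x' : Fin n → ℝ,
      quadObj Q p (x ⊔ x') + quadObj Q p (x ⊓ x') ≤ quadObj Q p x + quadObj Q p x') ↔
    (∀ i j : Fin n, i ≠ j → Q i j ≤ 0) :=
  quadObj_submodular_iff_general n Q hQ p
end

section
/- Let A be an m × n real matrix and b ∈ ℝᵐ. Define q : (Fin n → ℝ) × (Fin n → ℝ) → ℝ by q(x⁺, x⁻) = ‖A(x⁺ − x⁻) − b‖₂². Then q is submodular with respect to the componentwise order on the product (Fin n → ℝ) × (Fin n → ℝ) (i.e., q(z ⊔ z') + q(z ⊓ z') ≤ q(z) + q(z') for all pairs z = (x⁺, x⁻), z' = (x'⁺, x'⁻), with join and meet taken componentwise in all 2n coordinates) if and only if the columns of A are pairwise orthogonal, i.e., (AᵀA) i j = 0 for all i ≠ j. -/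
/-- The lifted least-squares objective `q(x⁺, x⁻) = ‖A(x⁺ − x⁻) − b‖₂²`,
written as a sum of squares. -/
def liftedLS {m n : ℕ} (A : Matrix (Fin m) (Fin n) ℝ) (b : Fin m → ℝ)
    (z : (Fin n → ℝ) × (Fin n → ℝ)) : ℝ :=
  ∑ k, (A.mulVec (z.1 - z.2) k - b k) ^ 2

/-- The quadratic form `w ↦ ‖Aw‖²`. -/
def Qf {m n : ℕ} (A : Matrix (Fin m) (Fin n) ℝ) (w : Fin n → ℝ) : ℝ :=
  ∑ k, (A.mulVec w k) ^ 2

lemma Qf_expand {m n : ℕ} (A : Matrix (Fin m) (Fin n) ℝ) (w : Fin n → ℝ) :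
    Qf A w = ∑ i, ∑ j, (∑ k, A k i * A k j) * (w i * w j) := by
  have h1 : Qf A w = ∑ k, ∑ i, ∑ j, (A k i * w i) * (A k j * w j) := by
    unfold Qf
    refine Finset.sum_congr rfl fun k _ => ?_
    rw [sq, Matrix.mulVec, dotProduct, Finset.sum_mul_sum]
  rw [h1, Finset.sum_comm]
  refine Finset.sum_congr rfl fun i _ => ?_
  rw [Finset.sum_comm]
  refine Finset.sum_congr rfl fun j _ => ?_
  rw [Finset.sum_mul]
  exact Finset.sum_congr rfl fun k _ => by ring

/-- Key identity: the submodularity defect equals a difference of quadratic forms. -/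
lemma liftedLS_key {m n : ℕ} (A : Matrix (Fin m) (Fin n) ℝ) (b : Fin m → ℝ)
    (z z' : (Fin n → ℝ) × (Fin n → ℝ)) :
    liftedLS A b z + liftedLS A b z' -
      (liftedLS A b (z ⊔ z') + liftedLS A b (z ⊓ z')) =
    (Qf A ((z.1 - z'.1) - (z.2 - z'.2)) -
      Qf A (fun i => |z.1 i - z'.1 i| - |z.2 i - z'.2 i|)) / 2 := by
  obtain ⟨p, q⟩ := z
  obtain ⟨p', q'⟩ := z'
  have hsupinf : ((p ⊔ p') - (q ⊔ q')) + ((p ⊓ p') - (q ⊓ q')) = (p - q) + (p' - q') := by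
    funext i
    simp only [Pi.add_apply, Pi.sub_apply, Pi.sup_apply, Pi.inf_apply]
    have h1 := max_add_min (p i) (p' i)
    have h2 := max_add_min (q i) (q' i)
    linarith
  have hdiff : ((p ⊔ p') - (q ⊔ q')) - ((p ⊓ p') - (q ⊓ q')) =
      fun i => |p i - p' i| - |q i - q' i| := by
    funext i
    simp only [Pi.sub_apply, Pi.sup_apply, Pi.inf_apply]
    have h1 := max_sub_min_eq_abs (p i) (p' i)
    have h2 := max_sub_min_eq_abs (q i) (q' i)
    rw [abs_sub_comm (p' i) (p i)] at h1
    rw [abs_sub_comm (q' i) (q i)] at h2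
    linarith
  show (∑ k, (A.mulVec (p - q) k - b k) ^ 2) + (∑ k, (A.mulVec (p' - q') k - b k) ^ 2) -
      ((∑ k, (A.mulVec ((p ⊔ p') - (q ⊔ q')) k - b k) ^ 2) +
       (∑ k, (A.mulVec ((p ⊓ p') - (q ⊓ q')) k - b k) ^ 2)) =
    ((∑ k, (A.mulVec ((p - p') - (q - q')) k) ^ 2) -
     (∑ k, (A.mulVec (fun i => |p i - p' i| - |q i - q' i|) k) ^ 2)) / 2
  rw [← Finset.sum_add_distrib, ← Finset.sum_add_distrib, ← Finset.sum_sub_distrib,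
    ← Finset.sum_sub_distrib, Finset.sum_div]
  refine Finset.sum_congr rfl fun k _ => ?_
  have e1 := congrFun (congrArg A.mulVec hsupinf) k
  have e2 := congrFun (congrArg A.mulVec hdiff) k
  simp only [Matrix.mulVec_add, Matrix.mulVec_sub, Pi.add_apply, Pi.sub_apply] at e1 e2 ⊢
  set u1 := A.mulVec (p ⊔ p') k
  set u2 := A.mulVec (q ⊔ q') k
  set v1 := A.mulVec (p ⊓ p') k
  set v2 := A.mulVec (q ⊓ q') k
  set g1 := A.mulVec p k
  set g2 := A.mulVec q k
  set d1 := A.mulVec p' k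
  set d2 := A.mulVec q' k
  set w := A.mulVec (fun i => |p i - p' i| - |q i - q' i|) k
  have h4 : v1 = g1 - g2 + d1 - d2 - u1 + u2 + v2 := by linarith
  have h5 : w = 2 * (u1 - u2) - (g1 - g2 + d1 - d2) := by linarith
  rw [h4, h5]; ring

lemma Qf_reduced {m n : ℕ} (A : Matrix (Fin m) (Fin n) ℝ)
    (horth : ∀ i j : Fin n, i ≠ j → (A.transpose * A) i j = 0)
    (a c : Fin n → ℝ) :
    Qf A (fun i => |a i| - |c i|) ≤ Qf A (a - c) := by
  rw [Qf_expand, Qf_expand]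
  refine Finset.sum_le_sum fun i _ => Finset.sum_le_sum fun j _ => ?_
  rcases eq_or_ne i j with rfl | hij
  · have hnn : (0:ℝ) ≤ ∑ k, A k i * A k i :=
      Finset.sum_nonneg fun k _ => mul_self_nonneg _
    refine mul_le_mul_of_nonneg_left ?_ hnn
    simp only [Pi.sub_apply]
    have h1 : |a i * c i| = |a i| * |c i| := abs_mul _ _
    have h2 := le_abs_self (a i * c i)
    nlinarith [sq_abs (a i), sq_abs (c i)]
  · have h0 : (∑ k, A k i * A k j) = 0 := by
      have := horth i j hij
      simpa [Matrix.mul_apply, Matrix.transpose_apply] using this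
    simp [h0]

/-- The lifted least-squares objective is submodular with respect to the
componentwise order on the product `(Fin n → ℝ) × (Fin n → ℝ)` iff the columns
of `A` are pairwise orthogonal, i.e. `(AᵀA)ᵢⱼ = 0` for all `i ≠ j`. -/
theorem liftedLS_submodular_iff
    (m n : ℕ) (A : Matrix (Fin m) (Fin n) ℝ) (b : Fin m → ℝ) :
    (∀ z z' : (Fin n → ℝ) × (Fin n → ℝ),
      liftedLS A b (z ⊔ z') + liftedLS A b (z ⊓ z') ≤ liftedLS A b z + liftedLS A b z') ↔
    (∀ i j : Fin n, i ≠ j → (A.transpose * A) i j = 0) := by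
  constructor
  · intro hsub i j hij
    have hred : ∀ a c : Fin n → ℝ,
        Qf A (fun i => |a i| - |c i|) ≤ Qf A (a - c) := by
      intro a c
      have hk := liftedLS_key A b (a, c) (0, 0)
      have hs := hsub (a, c) (0, 0)
      simp only [Prod.fst, Prod.snd, Prod.fst_zero, Prod.snd_zero, sub_zero,
        Pi.zero_apply] at hk
      linarith
    -- inequality 1 : from a = e_i - e_j, c = 0
    have habs1 : (fun t => |(Pi.single i (1:ℝ) - Pi.single j 1 : Fin n → ℝ) t|
          - |(0 : Fin n → ℝ) t|) =
        (Pi.single i (1:ℝ) : Fin n → ℝ) + Pi.single j 1 := by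
      funext t
      rcases eq_or_ne t i with rfl | hti
      · simp [Pi.single_apply, hij.symm]
      · rcases eq_or_ne t j with rfl | htj
        · simp [Pi.single_apply, hti]
        · simp [Pi.single_apply, hti, htj]
    have h1 := hred (Pi.single i (1:ℝ) - Pi.single j 1) 0
    rw [habs1, sub_zero] at h1
    -- inequality 2 : from a = e_i, c = -e_j
    have habs2 : (fun t => |(Pi.single i (1:ℝ) : Fin n → ℝ) t|
          - |(Pi.single j (-1:ℝ) : Fin n → ℝ) t|) =
        (Pi.single i (1:ℝ) : Fin n → ℝ) - Pi.single j 1 := by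
      funext t
      rcases eq_or_ne t i with rfl | hti
      · simp [Pi.single_apply, hij.symm]
      · rcases eq_or_ne t j with rfl | htj
        · simp [Pi.single_apply, hti]
        · simp [Pi.single_apply, hti, htj]
    have h2 := hred (Pi.single i (1:ℝ)) (Pi.single j (-1:ℝ))
    rw [habs2] at h2
    have hsubeq : (Pi.single i (1:ℝ) : Fin n → ℝ) - Pi.single j (-1:ℝ) =
        (Pi.single i (1:ℝ) : Fin n → ℝ) + Pi.single j 1 := by
      funext t; simp [Pi.single_apply]; split <;> split <;> ring
    rw [hsubeq] at h2
    have qplus : Qf A ((Pi.single i (1:ℝ) : Fin n → ℝ) + Pi.single j 1) =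
        ∑ k, (A k i + A k j) ^ 2 := by
      unfold Qf
      refine Finset.sum_congr rfl fun k _ => ?_
      simp [Matrix.mulVec_add, Matrix.mulVec_single]
    have qminus : Qf A ((Pi.single i (1:ℝ) : Fin n → ℝ) - Pi.single j 1) =
        ∑ k, (A k i - A k j) ^ 2 := by
      unfold Qf
      refine Finset.sum_congr rfl fun k _ => ?_
      simp [Matrix.mulVec_sub, Matrix.mulVec_single]
    rw [qplus, qminus] at h1
    rw [qplus, qminus] at h2
    have hsum1 : ∑ k, (A k i + A k j) ^ 2 - ∑ k, (A k i - A k j) ^ 2 =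
        4 * ∑ k, A k i * A k j := by
      rw [← Finset.sum_sub_distrib, Finset.mul_sum]
      exact Finset.sum_congr rfl fun k _ => by ring
    have hG : (A.transpose * A) i j = ∑ k, A k i * A k j := by
      simp [Matrix.mul_apply, Matrix.transpose_apply]
    rw [hG]
    linarith
  · intro horth z z'
    have hk := liftedLS_key A b z z'
    have hq := Qf_reduced A horth (z.1 - z'.1) (z.2 - z'.2)
    simp only [Pi.sub_apply] at hq
    linarith
end

section
/- Let n be a positive integer and λ ≥ 0 a real number. Define g : Finset (Fin n) → ℝ by g(A) = λ·(|A| + |{ i ∈ A : the predecessor of i is not in A }|), where for i ∈ Fin n the second set counts those indices i ∈ A such that either i = 0 or i − 1 ∉ A (so the second term counts the number of maximal runs of contiguous indices in A). Then g is monotone (A ⊆ B implies g(A) ≤ g(B)) and submodular (g(A ∪ B) + g(A ∩ B) ≤ g(A) + g(B) for all A, B ⊆ Fin n). -/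
open Classical in
/-- The contiguity-promoting set function
`g(A) = λ·(|A| + #{i ∈ A : the predecessor of i is not in A})`, where the
second term counts the number of maximal runs of contiguous indices in `A`
(an index `i ∈ A` starts a run iff `i = 0` or `i − 1 ∉ A`). -/
noncomputable def runPenalty (n : ℕ) (lam : ℝ) (A : Finset (Fin n)) : ℝ :=
  lam * ((A.card : ℝ) +
    ((A.filter fun i => ∀ j : Fin n, (j : ℕ) + 1 = (i : ℕ) → j ∉ A).card : ℝ))

/-!
Write `S(A)` for the run starts of `A`: the `i ∈ A` that cover no element of `A`. Both claims
follow from the fact that in a linear order every element covers, and is covered by, at most one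
element. Submodularity of `#S` follows from `S(A ∪ B) ∪ S(A ∩ B) ⊆ S(A) ∪ S(B)` and
`S(A ∪ B) ∩ S(A ∩ B) ⊆ S(A) ∩ S(B)`, while `#A` is modular. For monotonicity, enlarging `A` to
`B ⊇ A` destroys only starts whose predecessor lies in `B \ A`, so `#S` drops by at most
`#(B \ A) = #B - #A`.
-/

open Finset

namespace Finset

variable {α : Type*}

theorem card_add_card_le_of_union_subset_of_inter_subset [DecidableEq α] {X Y U V : Finset α}
    (hunion : X ∪ Y ⊆ U ∪ V) (hinter : X ∩ Y ⊆ U ∩ V) : #X + #Y ≤ #U + #V := by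
  rw [← card_union_add_card_inter X Y, ← card_union_add_card_inter U V]
  exact add_le_add (card_le_card hunion) (card_le_card hinter)

section LinearOrder

variable [LinearOrder α]

open scoped Classical in
noncomputable def runStarts (A : Finset α) : Finset α :=
  {i ∈ A | ∀ j ∈ A, ¬j ⋖ i}

theorem mem_runStarts {A : Finset α} {i : α} : i ∈ runStarts A ↔ i ∈ A ∧ ∀ j ∈ A, ¬j ⋖ i := by
  classical exact mem_filter

theorem runStarts_union_union_runStarts_inter_subset (A B : Finset α) :
    runStarts (A ∪ B) ∪ runStarts (A ∩ B) ⊆ runStarts A ∪ runStarts B := by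
  intro i hi
  simp only [mem_union, mem_inter, mem_runStarts] at hi ⊢
  rcases hi with ⟨hiAB, hstart⟩ | ⟨⟨hiA, hiB⟩, hstart⟩
  · rcases hiAB with hiA | hiB
    · exact .inl ⟨hiA, fun j hj => hstart j (.inl hj)⟩
    · exact .inr ⟨hiB, fun j hj => hstart j (.inr hj)⟩
  · by_contra! hnot
    obtain ⟨j, hjA, hji⟩ := hnot.1 hiA
    obtain ⟨k, hkB, hki⟩ := hnot.2 hiB
    obtain rfl := hji.unique_left hki
    exact hstart j ⟨hjA, hkB⟩ hji

theorem runStarts_union_inter_runStarts_inter_subset (A B : Finset α) :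
    runStarts (A ∪ B) ∩ runStarts (A ∩ B) ⊆ runStarts A ∩ runStarts B := by
  intro i hi
  simp only [mem_union, mem_inter, mem_runStarts] at hi ⊢
  obtain ⟨⟨-, hstart⟩, ⟨hiA, hiB⟩, -⟩ := hi
  exact ⟨⟨hiA, fun j hj => hstart j (.inl hj)⟩, ⟨hiB, fun j hj => hstart j (.inr hj)⟩⟩

theorem card_runStarts_union_add_card_runStarts_inter_le (A B : Finset α) :
    #(runStarts (A ∪ B)) + #(runStarts (A ∩ B)) ≤ #(runStarts A) + #(runStarts B) :=
  card_add_card_le_of_union_subset_of_inter_subset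
    (runStarts_union_union_runStarts_inter_subset A B)
    (runStarts_union_inter_runStarts_inter_subset A B)

theorem card_add_card_runStarts_union_add_inter_le (A B : Finset α) :
    #(A ∪ B) + #(runStarts (A ∪ B)) + (#(A ∩ B) + #(runStarts (A ∩ B))) ≤
      #A + #(runStarts A) + (#B + #(runStarts B)) := by
  have hstarts := card_runStarts_union_add_card_runStarts_inter_le A B
  have hcard := card_union_add_card_inter A B
  omega

theorem card_runStarts_sdiff_le {A B : Finset α} (hAB : A ⊆ B) :
    #(runStarts A \ runStarts B) ≤ #(B \ A) := by
  refine card_le_card_of_forall_subsingleton (fun i j => j ⋖ i) ?_ ?_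
  · intro i hi
    simp only [mem_sdiff, mem_runStarts, not_and, not_forall, not_not] at hi
    obtain ⟨⟨hiA, hstartA⟩, hnot⟩ := hi
    obtain ⟨j, hjB, hji⟩ := hnot (hAB hiA)
    exact ⟨j, mem_sdiff.2 ⟨hjB, fun hjA => hstartA j hjA hji⟩, hji⟩
  · exact fun _ _ _ hi₁ _ hi₂ => hi₁.2.unique_right hi₂.2

theorem monotone_card_add_card_runStarts :
    Monotone fun A : Finset α => #A + #(runStarts A) := by
  intro A B hAB
  have hsdiff := card_runStarts_sdiff_le hAB
  have hstarts := card_le_card_sdiff_add_card (s := runStarts A) (t := runStarts B)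
  have hcard := card_le_card hAB
  rw [card_sdiff_of_subset hAB] at hsdiff
  dsimp only
  omega

end LinearOrder

end Finset

-- The binder `i` in `runPenalty` elaborates at type `ℕ`, so its filter runs over the image of `A`.
theorem runPenalty_eq (n : ℕ) (lam : ℝ) (A : Finset (Fin n)) :
    runPenalty n lam A = lam * ((#A + #(runStarts A) : ℕ) : ℝ) := by
  have hstarts : #((A.image Fin.val).filter fun i => ∀ j : Fin n, (j : ℕ) + 1 = i → j ∉ A) =
      #(runStarts A) := by
    rw [filter_image, card_image_of_injective _ Fin.val_injective]
    congr 1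
    ext i
    simp only [mem_filter, mem_runStarts, Fin.covBy_iff, Nat.covBy_iff_add_one_eq]
    exact and_congr_right' ⟨fun h j hj hji => h j hji hj, fun h j hji hj => h j hj hji⟩
  rw [runPenalty, Nat.cast_add, ← hstarts]
  congr
  ext
  simp

theorem runPenalty_monotone_submodular_general
    (n : ℕ) (lam : ℝ) (hlam : 0 ≤ lam) :
    (∀ A B : Finset (Fin n), A ⊆ B → runPenalty n lam A ≤ runPenalty n lam B) ∧
    (∀ A B : Finset (Fin n),
      runPenalty n lam (A ∪ B) + runPenalty n lam (A ∩ B) ≤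
      runPenalty n lam A + runPenalty n lam B) := by
  simp only [runPenalty_eq, ← mul_add]
  refine ⟨fun A B hAB => ?_, fun A B => ?_⟩ <;> refine mul_le_mul_of_nonneg_left ?_ hlam
  · exact_mod_cast monotone_card_add_card_runStarts hAB
  · exact_mod_cast card_add_card_runStarts_union_add_inter_le A B

/-- For `λ ≥ 0`, the contiguity-promoting set function is monotone and
submodular. -/
theorem runPenalty_monotone_submodular
    (n : ℕ) (hn : 0 < n) (lam : ℝ) (hlam : 0 ≤ lam) :
    (∀ A B : Finset (Fin n), A ⊆ B → runPenalty n lam A ≤ runPenalty n lam B) ∧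
    (∀ A B : Finset (Fin n),
      runPenalty n lam (A ∪ B) + runPenalty n lam (A ∩ B) ≤
      runPenalty n lam A + runPenalty n lam B) :=
  runPenalty_monotone_submodular_general n lam hlam
end

section
/- Let A be an m × n real matrix and b ∈ ℝᵐ, and define supp(x) = { i : x i ≠ 0 } for x : Fin n → ℝ. Then the infimum over x ∈ ℝⁿ of ‖Ax − b‖₂² + |supp(x)| equals the infimum over pairs (x⁺, x⁻) with x⁺ ≥ 0 and x⁻ ≥ 0 (componentwise) of ‖A(x⁺ − x⁻) − b‖₂² + |supp(x⁺)| + |supp(x⁻)|. -/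
/-- The support of a vector: the finite set of indices where it is nonzero. -/
noncomputable def supp {n : ℕ} (x : Fin n → ℝ) : Finset (Fin n) :=
  Finset.univ.filter fun i => x i ≠ 0

/-- The `ℓ₀`-regularized least-squares problem over `ℝⁿ` has the same optimal
value as its nonnegative lifting: the infimum of `‖Ax − b‖₂² + |supp x|` over
`x ∈ ℝⁿ` equals the infimum of `‖A(x⁺ − x⁻) − b‖₂² + |supp x⁺| + |supp x⁻|`
over componentwise-nonnegative pairs `(x⁺, x⁻)`. -/
theorem lifted_least_squares_same_value
    (m n : ℕ) (A : Matrix (Fin m) (Fin n) ℝ) (b : Fin m → ℝ) :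
    sInf {r : ℝ | ∃ x : Fin n → ℝ,
      r = ∑ k, (A.mulVec x k - b k) ^ 2 + ((supp x).card : ℝ)} =
    sInf {r : ℝ | ∃ xp xm : Fin n → ℝ, (∀ i, 0 ≤ xp i) ∧ (∀ i, 0 ≤ xm i) ∧
      r = ∑ k, (A.mulVec (xp - xm) k - b k) ^ 2 +
        (((supp xp).card : ℝ) + ((supp xm).card : ℝ))} := by
  set S1 := {r : ℝ | ∃ x : Fin n → ℝ,
      r = ∑ k, (A.mulVec x k - b k) ^ 2 + ((supp x).card : ℝ)} with hS1
  set S2 := {r : ℝ | ∃ xp xm : Fin n → ℝ, (∀ i, 0 ≤ xp i) ∧ (∀ i, 0 ≤ xm i) ∧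
      r = ∑ k, (A.mulVec (xp - xm) k - b k) ^ 2 +
        (((supp xp).card : ℝ) + ((supp xm).card : ℝ))} with hS2
  have hbdd1 : BddBelow S1 := by
    refine ⟨0, fun r hr => ?_⟩
    obtain ⟨x, rfl⟩ := hr
    positivity
  have hbdd2 : BddBelow S2 := by
    refine ⟨0, fun r hr => ?_⟩
    obtain ⟨xp, xm, _, _, rfl⟩ := hr
    positivity
  have hne1 : S1.Nonempty := ⟨_, 0, rfl⟩
  have hne2 : S2.Nonempty := ⟨_, 0, 0, fun _ => le_refl 0, fun _ => le_refl 0, rfl⟩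
  apply le_antisymm
  · -- sInf S1 ≤ sInf S2 : each element of S2 dominates an element of S1
    apply le_csInf hne2
    rintro r ⟨xp, xm, hp, hm, rfl⟩
    refine le_trans (csInf_le hbdd1 ⟨xp - xm, rfl⟩) ?_
    gcongr
    have hsub : supp (xp - xm) ⊆ supp xp ∪ supp xm := by
      intro i hi
      simp only [supp, Finset.mem_filter, Finset.mem_union, Finset.mem_univ, true_and,
        Pi.sub_apply] at hi ⊢
      by_contra h
      push_neg at h
      simp [h.1, h.2] at hi
    calc ((supp (xp - xm)).card : ℝ) ≤ ((supp xp ∪ supp xm).card : ℝ) := by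
          exact_mod_cast Finset.card_le_card hsub
      _ ≤ ((supp xp).card : ℝ) + ((supp xm).card : ℝ) := by
          exact_mod_cast Finset.card_union_le _ _
  · -- sInf S2 ≤ sInf S1 : S1 ⊆ S2 via positive/negative parts
    apply csInf_le_csInf hbdd2 hne1
    rintro r ⟨x, rfl⟩
    refine ⟨fun i => max (x i) 0, fun i => max (-x i) 0,
      fun i => le_max_right _ _, fun i => le_max_right _ _, ?_⟩
    have hsubeq : (fun i => max (x i) 0) - (fun i => max (-x i) 0) = x := by
      funext i
      simp only [Pi.sub_apply]
      rcases le_total (x i) 0 with h | h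
      · rw [max_eq_right h, max_eq_left (by linarith)]; ring
      · rw [max_eq_left h, max_eq_right (by linarith)]; ring
    rw [hsubeq]
    congr 1
    have hdisj : Disjoint (supp fun i => max (x i) 0) (supp fun i => max (-x i) 0) := by
      rw [Finset.disjoint_left]
      intro i hi hi'
      simp only [supp, Finset.mem_filter, Finset.mem_univ, true_and] at hi hi'
      rcases le_total (x i) 0 with h | h
      · exact hi (max_eq_right h)
      · exact hi' (max_eq_right (by linarith))
    have hunion : (supp fun i => max (x i) 0) ∪ (supp fun i => max (-x i) 0) = supp x := by
      ext i
      simp only [supp, Finset.mem_filter, Finset.mem_union, Finset.mem_univ, true_and]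
      constructor
      · rintro (h | h)
        · intro hx; exact h (by simp [hx])
        · intro hx; exact h (by simp [hx])
      · intro hx
        rcases lt_or_gt_of_ne hx with h | h
        · right; rw [max_eq_left (by linarith)]; exact ne_of_gt (by linarith)
        · left; rw [max_eq_left h.le]; exact ne_of_gt h
    rw [← Nat.cast_add, ← Finset.card_union_of_disjoint hdisj, hunion]
end
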